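/- Let G be a group and φ a central automorphism of G with φ² = id. If the quandle Alex(G,φ) is connected (the inner automorphism group acts transitively on it), then G is abelian. -/

import Mathlib

/-- The generalized Alexander quandle operation `a * b = φ(a b⁻¹) b` on a group `G`. -/
def qop {G : Type*} [Group G] (φ : G ≃* G) (a b : G) : G := φ (a * b⁻¹) * b

/-- The inner automorphism `S_g : a ↦ a * g = φ(a g⁻¹) g` of `Alex(G, φ)`. -/
def Sm {G : Type*} [Group G] (φ : G ≃* G) (g : G) : Equiv.Perm G where
  toFun a := φ (a * g⁻¹) * g
  invFun a := φ.symm (a * g⁻¹) * g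
  left_inv a := by simp
  right_inv a := by simp

/-- The inner automorphism group of `Alex(G, φ)`, generated by the `S_g`. -/
def InnAlex {G : Type*} [Group G] (φ : G ≃* G) : Subgroup (Equiv.Perm G) :=
  Subgroup.closure (Set.range (Sm φ))

/-- If `φ` is a central automorphism with `φ² = id` and `Alex(G, φ)` is connected
(i.e. `Inn(Alex(G, φ))` acts transitively on `G`), then `G` is abelian. -/
theorem connected_central_involution_abelian {G : Type*} [Group G] (φ : G ≃* G)
    (hc : ∀ a : G, a⁻¹ * φ a ∈ Subgroup.center G)
    (hinv : ∀ a : G, φ (φ a) = a)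
    (hconn : ∀ x y : G, ∃ f ∈ InnAlex φ, f x = y) :
    ∀ a b : G, a * b = b * a := by
  have key : ∀ f ∈ InnAlex φ, ∀ a : G, a⁻¹ * f a ∈ Subgroup.center G := by
    intro f hf
    refine Subgroup.closure_induction ?_ ?_ ?_ ?_ hf
    · rintro _ ⟨g, rfl⟩ a
      have hc' := hc (a * g⁻¹)
      have h1 : a⁻¹ * Sm φ g a = g⁻¹ * ((a * g⁻¹)⁻¹ * φ (a * g⁻¹)) * g := by
        simp only [Sm, Equiv.coe_fn_mk]
        group
      rw [h1]
      have hcomm := (Subgroup.mem_center_iff.mp hc') g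
      rw [mul_assoc, ← hcomm, ← mul_assoc, inv_mul_cancel, one_mul]
      exact hc'
    · intro a; simpa using Subgroup.one_mem _
    · intro f g _ _ hfc hgc a
      have : a⁻¹ * (f * g) a = (a⁻¹ * g a) * ((g a)⁻¹ * f (g a)) := by
        simp only [Equiv.Perm.mul_apply]
        rw [mul_assoc, mul_inv_cancel_left]
      rw [this]
      exact mul_mem (hgc a) (hfc (g a))
    · intro f _ hfc a
      have h := hfc (f⁻¹ a)
      rw [show f (f⁻¹ a) = a from f.apply_symm_apply a] at h
      have := inv_mem h
      simpa using this
  intro a b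
  obtain ⟨f, hf, hfe⟩ := hconn 1 b
  have hb := key f hf 1
  rw [hfe] at hb
  simp only [inv_one, one_mul] at hb
  exact Subgroup.mem_center_iff.mp hb a
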